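/- arXiv:2512.15496 — 2 statements merged into one kernel-verified Lean document; each statement's English description precedes it below -/
import Mathlib

section
/- Let M be a Kripke model, and let S be a relation on its worlds satisfying: (Sim_k) if S w v and w ∈ P_k then v ∈ P_k, for all k; and (Sim⌣) if S w v and w R s then there exists t with v R t and S t s. Then for every formula φ of the language generated by propositional letters, ⊤, ⊥, ∧, ∨ and the paraconsistent negation ⌣ (where w ⊩ ⌣φ iff there exists v with w R v and v ⊮ φ), S w v and w ⊩ φ imply v ⊩ φ. -/
inductive Fm (K : Type) : Type
  | prop (k : K)
  | top
  | bot
  | and (a b : Fm K)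
  | or (a b : Fm K)
  | smile (a : Fm K)

def Sat {W K : Type} (R : W → W → Prop) (P : K → W → Prop) : W → Fm K → Prop
  | w, .prop k => P k w
  | _, .top => True
  | _, .bot => False
  | w, .and a b => Sat R P w a ∧ Sat R P w b
  | w, .or a b => Sat R P w a ∨ Sat R P w b
  | w, .smile a => ∃ v, R w v ∧ ¬ Sat R P v a

theorem stmt1 {W K : Type} (R : W → W → Prop) (P : K → W → Prop)
    (S : W → W → Prop)
    (hP : ∀ k w v, S w v → P k w → P k v)
    (hOp : ∀ w v s, S w v → R w s → ∃ t, R v t ∧ S t s) :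
    ∀ (φ : Fm K) (w v : W), S w v → Sat R P w φ → Sat R P v φ := by
  intro φ
  induction φ with
  | prop k => intro w v hS h; exact hP k w v hS h
  | top => intro _ _ _ _; trivial
  | bot => intro _ _ _ h; exact h
  | and a b iha ihb => intro w v hS h; exact ⟨iha w v hS h.1, ihb w v hS h.2⟩
  | or a b iha ihb =>
      intro w v hS h
      rcases h with h | h
      · exact Or.inl (iha w v hS h)
      · exact Or.inr (ihb w v hS h)
  | smile a ih =>
      intro w v hS h
      obtain ⟨s, hws, hns⟩ := h
      obtain ⟨t, hvt, hts⟩ := hOp w v s hS hws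
      exact ⟨t, hvt, fun ht => hns (ih t s hts ht)⟩
end

section
/- Let Λ ⊆ {⌣, ⌢} and let M1, M2 be Kripke models with worlds w1 ∈ W1, w2 ∈ W2. Then w1 and w2 are related by some Λ-simulation on the disjoint union M1 ⊎ M2 if and only if they are related by a directed Λ-simulation (F, B): that is, there exist F ⊆ W1 × W2 and B ⊆ W2 × W1 with (w1,w2) ∈ F satisfying the forward and backward conditions (F_k), (B_k), (F★), (B★) for each ★ ∈ Λ. -/
inductive Op : Type
  | smile
  | frown
  | cons
  | det
  | incons
  | undet
  deriving DecidableEq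

/-- The (typed) simulation conditions, parametric in the similarity type `Λ`,
relating two (possibly different) Kripke models. -/
def SimConds {K Wi Wj : Type} (Λ : Set Op)
    (Ri : Wi → Wi → Prop) (Rj : Wj → Wj → Prop)
    (Pi : K → Wi → Prop) (Pj : K → Wj → Prop)
    (Sij : Wi → Wj → Prop) (Sji : Wj → Wi → Prop)
    (Sii : Wi → Wi → Prop) (Sjj : Wj → Wj → Prop) : Prop :=
  (∀ k w v, Sij w v → Pi k w → Pj k v) ∧
  (Op.smile ∈ Λ → ∀ w v s, Sij w v → Ri w s → ∃ t, Rj v t ∧ Sji t s) ∧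
  (Op.frown ∈ Λ → ∀ w v t, Sij w v → Rj v t → ∃ s, Ri w s ∧ Sji t s) ∧
  (Op.cons ∈ Λ → ∀ w v t, Sij w v → Rj v t →
      (Sjj v t ∨ (Sji v w ∧ ∃ s, Ri w s ∧ Sij s t))) ∧
  (Op.det ∈ Λ → ∀ w v t, Sij w v → Rj v t →
      (Sjj t v ∨ ∃ s, Ri w s ∧ Sji t s)) ∧
  (Op.incons ∈ Λ → ∀ w v s, Sij w v → Ri w s →
      (Sii w s ∨ ∃ t, Rj v t ∧ Sji t s)) ∧
  (Op.undet ∈ Λ → ∀ w v s, Sij w v → Ri w s →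
      (Sii s w ∨ (Sji v w ∧ ∃ t, Rj v t ∧ Sij s t)))

/-- A `Λ`-simulation on a single Kripke model. -/
def IsSim {K W : Type} (Λ : Set Op) (R : W → W → Prop) (P : K → W → Prop)
    (S : W → W → Prop) : Prop :=
  SimConds Λ R R P P S S S S

/-- Accessibility relation of the disjoint union of two Kripke models. -/
def sumR {W1 W2 : Type} (R1 : W1 → W1 → Prop) (R2 : W2 → W2 → Prop) :
    W1 ⊕ W2 → W1 ⊕ W2 → Prop
  | .inl w, .inl v => R1 w v
  | .inr w, .inr v => R2 w v
  | _, _ => False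

/-- Truth sets of the disjoint union of two Kripke models. -/
def sumP {K W1 W2 : Type} (P1 : K → W1 → Prop) (P2 : K → W2 → Prop) :
    K → W1 ⊕ W2 → Prop := fun k => Sum.elim (P1 k) (P2 k)

/-- A directed `Λ`-simulation between two Kripke models, for `Λ ⊆ {⌣, ⌢}`. -/
def DirSim {K W1 W2 : Type} (Λ : Set Op)
    (R1 : W1 → W1 → Prop) (R2 : W2 → W2 → Prop)
    (P1 : K → W1 → Prop) (P2 : K → W2 → Prop)
    (F : W1 → W2 → Prop) (B : W2 → W1 → Prop) : Prop :=
  (∀ k w1 w2, F w1 w2 → P1 k w1 → P2 k w2) ∧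
  (∀ k w2 w1, B w2 w1 → P2 k w2 → P1 k w1) ∧
  (Op.smile ∈ Λ → ∀ w1 w2 v1, F w1 w2 → R1 w1 v1 →
      ∃ t2, R2 w2 t2 ∧ B t2 v1) ∧
  (Op.smile ∈ Λ → ∀ w2 w1 v2, B w2 w1 → R2 w2 v2 →
      ∃ t1, R1 w1 t1 ∧ F t1 v2) ∧
  (Op.frown ∈ Λ → ∀ w1 w2 v2, F w1 w2 → R2 w2 v2 →
      ∃ t1, R1 w1 t1 ∧ B v2 t1) ∧
  (Op.frown ∈ Λ → ∀ w2 w1 v1, B w2 w1 → R1 w1 v1 →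
      ∃ t2, R2 w2 t2 ∧ F v1 t2)

theorem stmt11 {K W1 W2 : Type} (Λ : Set Op)
    (hΛ : Λ ⊆ {Op.smile, Op.frown})
    (R1 : W1 → W1 → Prop) (R2 : W2 → W2 → Prop)
    (P1 : K → W1 → Prop) (P2 : K → W2 → Prop)
    (w1 : W1) (w2 : W2) :
    (∃ S, IsSim Λ (sumR R1 R2) (sumP P1 P2) S ∧
        S (Sum.inl w1) (Sum.inr w2)) ↔
    (∃ F B, DirSim Λ R1 R2 P1 P2 F B ∧ F w1 w2) := by
  constructor
  · rintro ⟨S, ⟨hP, hsm, hfr, _, _, _, _⟩, hS⟩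
    refine ⟨fun a b => S (.inl a) (.inr b), fun b a => S (.inr b) (.inl a),
      ⟨?_, ?_, ?_, ?_, ?_, ?_⟩, hS⟩
    · exact fun k a b h => hP k _ _ h
    · exact fun k b a h => hP k _ _ h
    · intro h a b c hF hR
      obtain ⟨t, ht, hts⟩ := hsm h (.inl a) (.inr b) (.inl c) hF hR
      cases t with
      | inl t => exact ht.elim
      | inr t => exact ⟨t, ht, hts⟩
    · intro h b a c hB hR
      obtain ⟨t, ht, hts⟩ := hsm h (.inr b) (.inl a) (.inr c) hB hR
      cases t with
      | inl t => exact ⟨t, ht, hts⟩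
      | inr t => exact ht.elim
    · intro h a b c hF hR
      obtain ⟨t, ht, hts⟩ := hfr h (.inl a) (.inr b) (.inr c) hF hR
      cases t with
      | inl t => exact ⟨t, ht, hts⟩
      | inr t => exact ht.elim
    · intro h b a c hB hR
      obtain ⟨t, ht, hts⟩ := hfr h (.inr b) (.inl a) (.inl c) hB hR
      cases t with
      | inl t => exact ht.elim
      | inr t => exact ⟨t, ht, hts⟩
  · rintro ⟨F, B, ⟨hF1, hB1, hF2, hB2, hF3, hB3⟩, hFw⟩
    refine ⟨fun x y => match x, y with
      | .inl a, .inr b => F a b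
      | .inr b, .inl a => B b a
      | _, _ => False, ⟨?_, ?_, ?_, ?_, ?_, ?_, ?_⟩, hFw⟩
    · rintro k (a | b) (c | d) h hp
      · exact h.elim
      · exact hF1 k a d h hp
      · exact hB1 k b c h hp
      · exact h.elim
    · rintro h (a | b) (c | d) (e | f) hS hR
      · exact hS.elim
      · exact hS.elim
      · obtain ⟨t, ht, hts⟩ := hF2 h a d e hS hR
        exact ⟨.inr t, ht, hts⟩
      · exact hR.elim
      · exact hR.elim
      · obtain ⟨t, ht, hts⟩ := hB2 h b c f hS hR
        exact ⟨.inl t, ht, hts⟩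
      · exact hS.elim
      · exact hS.elim
    · rintro h (a | b) (c | d) (e | f) hS hR
      · exact hS.elim
      · exact hS.elim
      · exact hR.elim
      · obtain ⟨t, ht, hts⟩ := hF3 h a d f hS hR
        exact ⟨.inl t, ht, hts⟩
      · obtain ⟨t, ht, hts⟩ := hB3 h b c e hS hR
        exact ⟨.inr t, ht, hts⟩
      · exact hR.elim
      · exact hS.elim
      · exact hS.elim
    · intro h; exact absurd (hΛ h) (by simp)
    · intro h; exact absurd (hΛ h) (by simp)
    · intro h; exact absurd (hΛ h) (by simp)
    · intro h; exact absurd (hΛ h) (by simp)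
end
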